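/- There exists a uniformly resolvable decomposition of the complete 5-partite graph of type 2^5 (vertex set Z_10, parts {i, i+5}) into 4 perfect matchings and 2 parallel classes each consisting of 2 vertex-disjoint 5-cycles. -/

import Mathlib

/-- The edges of a path given by the list of its vertices in order. -/
def pathEdges {V : Type*} [DecidableEq V] (l : List V) : Finset (Sym2 V) :=
  ((l.zip l.tail).map (fun p : V × V => Sym2.mk p.1 p.2)).toFinset

/-- The edges of a cycle given by the list of its vertices in cyclic order. -/
def cycEdges {V : Type*} [DecidableEq V] (l : List V) : Finset (Sym2 V) :=
  ((l.zip (l.rotate 1)).map (fun p : V × V => Sym2.mk p.1 p.2)).toFinset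

/-- A parallel class of paths on `k` vertices in `G`: vertex-disjoint paths covering
every vertex. -/
def IsPathClass {V : Type*} (G : SimpleGraph V) (k : ℕ) (C : Finset (List V)) : Prop :=
  (∀ l ∈ C, l.length = k ∧ l.Nodup ∧ l.Chain' G.Adj) ∧
  ∀ x : V, ∃! l : List V, l ∈ C ∧ x ∈ l

/-- A parallel class of cycles on `k` vertices in `G`: vertex-disjoint `k`-cycles
covering every vertex. -/
def IsCycleClass {V : Type*} (G : SimpleGraph V) (k : ℕ) (C : Finset (List V)) : Prop :=
  (∀ l ∈ C, l.length = k ∧ l.Nodup ∧ ∀ p ∈ l.zip (l.rotate 1), G.Adj p.1 p.2) ∧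
  ∀ x : V, ∃! l : List V, l ∈ C ∧ x ∈ l

/-- The edges of the `i`-th class, where the first `m` classes are matching (path)
classes and the last `n` classes are cycle classes. -/
def edgesOf {V : Type*} [DecidableEq V] {m n : ℕ}
    (F : Fin m ⊕ Fin n → Finset (List V)) : Fin m ⊕ Fin n → Finset (Sym2 V)
  | Sum.inl i => (F (Sum.inl i)).biUnion pathEdges
  | Sum.inr i => (F (Sum.inr i)).biUnion cycEdges

/-- The complete 5-partite graph of type `2⁵` on `Z₁₀`, with parts `{i, i+5}`:
two vertices are adjacent iff their residues modulo 5 differ. -/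
def G25 : SimpleGraph (ZMod 10) :=
  SimpleGraph.comap (fun x => ZMod.castHom (show (5:ℕ) ∣ 10 by norm_num) (ZMod 5) x) ⊤

/-- A uniformly resolvable decomposition of the complete 5-partite graph of type `2⁵`
into `r` perfect matchings and `t` parallel classes each consisting of 2
vertex-disjoint 5-cycles. -/
def IsURD25 (r t : ℕ) : Prop :=
  ∃ F : Fin r ⊕ Fin t → Finset (List (ZMod 10)),
    (∀ i : Fin r, IsPathClass G25 2 (F (Sum.inl i))) ∧
    (∀ i : Fin t, IsCycleClass G25 5 (F (Sum.inr i))) ∧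
    (∀ i j, i ≠ j → Disjoint (edgesOf F i) (edgesOf F j)) ∧
    (∀ e, e ∈ G25.edgeSet ↔ ∃ i, e ∈ edgesOf F i)

/-!
The 40 edges of the graph fall into the four difference classes `±1, ±2, ±3, ±4` of `Z₁₀`,
ten edges each (difference `5` joins the two vertices of a part). Each odd difference class
splits into two perfect matchings according to the parity of the smaller endpoint, and each
even difference class is the union of two `5`-cycles, one on the even and one on the odd
vertices. Everything else is a finite check.
-/

instance : DecidableRel G25.Adj := fun _ _ => inferInstanceAs (Decidable (¬ _ = _))

theorem Finset.existsUnique_mem_and_iff {α : Type*} (C : Finset α) (p : α → Prop) :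
    (∃! a, a ∈ C ∧ p a) ↔ ∃ a ∈ C, p a ∧ ∀ b ∈ C, p b → b = a :=
  ⟨fun ⟨a, ⟨ha, hpa⟩, hu⟩ => ⟨a, ha, hpa, fun b hb hpb => hu b ⟨hb, hpb⟩⟩,
    fun ⟨a, ha, hpa, hu⟩ => ⟨a, ⟨ha, hpa⟩, fun b ⟨hb, hpb⟩ => hu b hb hpb⟩⟩

def matchings25 : Fin 4 → Finset (List (ZMod 10)) :=
  ![{[0, 1], [2, 3], [4, 5], [6, 7], [8, 9]},
    {[1, 2], [3, 4], [5, 6], [7, 8], [9, 0]},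
    {[0, 3], [2, 5], [4, 7], [6, 9], [8, 1]},
    {[1, 4], [3, 6], [5, 8], [7, 0], [9, 2]}]

def cycleClasses25 : Fin 2 → Finset (List (ZMod 10)) :=
  ![{[0, 2, 4, 6, 8], [1, 3, 5, 7, 9]},
    {[0, 4, 8, 2, 6], [1, 5, 9, 3, 7]}]

def urd25 : Fin 4 ⊕ Fin 2 → Finset (List (ZMod 10)) :=
  Sum.elim matchings25 cycleClasses25

theorem isPathClass_matchings25 (i : Fin 4) : IsPathClass G25 2 (matchings25 i) := by
  simp only [IsPathClass, List.Chain', Finset.existsUnique_mem_and_iff]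
  fin_cases i <;> decide

theorem isCycleClass_cycleClasses25 (i : Fin 2) : IsCycleClass G25 5 (cycleClasses25 i) := by
  simp only [IsCycleClass, Finset.existsUnique_mem_and_iff]
  fin_cases i <;> decide

theorem disjoint_edgesOf_urd25 : ∀ i j, i ≠ j → Disjoint (edgesOf urd25 i) (edgesOf urd25 j) := by
  decide

theorem mem_edgeSet_G25_iff_exists_mem_edgesOf_urd25 :
    ∀ e, e ∈ G25.edgeSet ↔ ∃ i, e ∈ edgesOf urd25 i := by
  decide

/-- The complete 5-partite graph of type `2⁵` admits a uniformly resolvable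
decomposition into 4 perfect matchings and 2 parallel classes each consisting of 2
vertex-disjoint 5-cycles. -/
theorem stmt15 : IsURD25 4 2 :=
  ⟨urd25, isPathClass_matchings25, isCycleClass_cycleClasses25, disjoint_edgesOf_urd25,
    mem_edgeSet_G25_iff_exists_mem_edgesOf_urd25⟩
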